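/- arXiv:2309.06689 — 5 statements merged into one kernel-verified Lean document; each statement's English description precedes it below -/
import Mathlib

section
/- For |q| < 1, the theta function φ(-q) := Σ_{k∈ℤ} (-q)^{k²} satisfies the product identity φ(-q) = (q;q)_∞² / (q²;q²)_∞, where (A;q)_∞ = Π_{k≥0}(1 - A q^k). -/
/-!
Gauss's finite form of the identity: with Gaussian binomials `[m, k]` in base `p²`,
`∑ⱼ p^(j²) [2n, n + j] = ∏_{k<n} (1 + p^(2k+1))²`. Passing from `2n` to `2n + 1` and from
`2n + 1` to `2n + 2` is one of the two `q`-Pascal rules each, after which a shift `j ↦ j ± 1`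
produces the factor `1 + p^(2n+1)`. As `n → ∞`, `[2n, n + j] → 1 / (p²;p²)_∞` boundedly in `j`,
so Tannery's theorem gives `∑ⱼ p^(j²) = (-p;p²)_∞² (p²;p²)_∞`. Put `p = -q` and split
`(q;q)_∞ = (q;q²)_∞ (q²;q²)_∞`.
-/

open Filter Topology Function

lemma finsum_add_mul_comp_add {G R : Type*} [AddGroup G] [Semiring R] {g : G → R}
    (hg : HasFiniteSupport g) (a : R) (s : G) :
    ∑ᶠ j, (g j + a * g (j + s)) = (1 + a) * ∑ᶠ j, g j := by
  have hgs : HasFiniteSupport fun j => g (j + s) := by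
    rw [HasFiniteSupport, ← Function.comp_def, support_comp_eq_preimage]
    exact hg.preimage (add_left_injective s).injOn
  rw [finsum_add_distrib hg (hgs.subset (support_mul_subset_right (fun _ => a) _)),
    ← mul_finsum' _ _ hgs,
    show ∑ᶠ j, g (j + s) = ∑ᶠ j, g j from finsum_comp_equiv (Equiv.addRight s), add_mul, one_mul]

lemma zpow_mul_zpow_of_add_eq {G₀ : Type*} [GroupWithZero G₀] (p : G₀) {a b c d : ℤ}
    (h : a + b = c + d) (hne : c + d ≠ 0) : p ^ a * p ^ b = p ^ c * p ^ d := by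
  rw [← zpow_add' (.inr (.inl (h ▸ hne))), h, zpow_add' (.inr (.inl hne))]

lemma multipliable_one_sub_of_summable {ι R : Type*} [NormedCommRing R] [NormOneClass R]
    [CompleteSpace R] {f : ι → R} (hf : Summable fun i => ‖f i‖) :
    Multipliable fun i => 1 - f i := by
  simpa [sub_eq_add_neg] using multipliable_one_add_of_summable (f := fun i => -f i) (by simpa)

variable {K : Type*}

section Field

variable [Field K]

-- `(Q;Q)_m`
def qPochhammer (Q : K) (m : ℕ) : K := ∏ i ∈ Finset.range m, (1 - Q ^ (i + 1))

-- `1 / (Q;Q)_k`, extended by `0` to `k < 0`: then `qPochhammerInv_succ_mul` holds for every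
-- `k : ℤ`, and the `q`-Pascal rules below need no boundary cases.
def qPochhammerInv (Q : K) (k : ℤ) : K := if 0 ≤ k then (qPochhammer Q k.toNat)⁻¹ else 0

def gaussBinom (Q : K) (m : ℕ) (k : ℤ) : K :=
  qPochhammer Q m * qPochhammerInv Q k * qPochhammerInv Q (m - k)

variable {Q : K}

lemma qPochhammer_succ (m : ℕ) :
    qPochhammer Q (m + 1) = qPochhammer Q m * (1 - Q ^ (m + 1)) :=
  Finset.prod_range_succ _ _

lemma qPochhammerInv_of_neg {k : ℤ} (hk : k < 0) : qPochhammerInv Q k = 0 :=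
  if_neg hk.not_ge

lemma qPochhammerInv_natCast (k : ℕ) : qPochhammerInv Q k = (qPochhammer Q k)⁻¹ := by
  simp [qPochhammerInv]

lemma qPochhammerInv_succ_mul (hQ : ∀ i : ℕ, Q ^ (i + 1) ≠ 1) (k : ℤ) :
    qPochhammerInv Q (k + 1) * (1 - Q ^ (k + 1)) = qPochhammerInv Q k := by
  rcases lt_trichotomy k (-1) with hk | rfl | hk
  · rw [qPochhammerInv_of_neg (by omega), qPochhammerInv_of_neg (by omega), zero_mul]
  · rw [qPochhammerInv_of_neg (k := -1) (by norm_num)]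
    simp
  · lift k to ℕ using (by omega)
    rw [← Nat.cast_succ, zpow_natCast, qPochhammerInv_natCast, qPochhammerInv_natCast,
      qPochhammer_succ, mul_inv, inv_mul_cancel_right₀ (sub_ne_zero.2 (hQ k).symm)]

lemma gaussBinom_of_neg {m : ℕ} {k : ℤ} (hk : k < 0) : gaussBinom Q m k = 0 := by
  rw [gaussBinom, qPochhammerInv_of_neg hk, mul_zero, zero_mul]

lemma gaussBinom_of_lt {m : ℕ} {k : ℤ} (hk : m < k) : gaussBinom Q m k = 0 := by
  rw [gaussBinom, qPochhammerInv_of_neg (k := m - k) (by omega), mul_zero]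

lemma gaussBinom_succ_succ (hQ : ∀ i : ℕ, Q ^ (i + 1) ≠ 1) (m : ℕ) (k : ℤ) :
    gaussBinom Q (m + 1) (k + 1) =
      gaussBinom Q m (k + 1) + Q ^ ((m : ℤ) - k) * gaussBinom Q m k := by
  have hk := qPochhammerInv_succ_mul hQ k
  have hmk := qPochhammerInv_succ_mul hQ (m - (k + 1))
  rw [show (m : ℤ) - (k + 1) + 1 = m - k by ring] at hmk
  have hpow : Q ^ ((m : ℤ) - k) * Q ^ (k + 1) = Q ^ (m + 1) := by
    rw [← zpow_add' (.inr (.inl (by omega))), ← zpow_natCast]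
    push_cast; ring_nf
  simp only [gaussBinom, qPochhammer_succ]
  rw [show ((m + 1 : ℕ) : ℤ) - (k + 1) = m - k by push_cast; ring, ← hk, ← hmk, ← hpow]
  ring

lemma gaussBinom_succ_succ' (hQ : ∀ i : ℕ, Q ^ (i + 1) ≠ 1) (m : ℕ) (k : ℤ) :
    gaussBinom Q (m + 1) (k + 1) = Q ^ (k + 1) * gaussBinom Q m (k + 1) + gaussBinom Q m k := by
  have hk := qPochhammerInv_succ_mul hQ k
  have hmk := qPochhammerInv_succ_mul hQ (m - (k + 1))
  rw [show (m : ℤ) - (k + 1) + 1 = m - k by ring] at hmk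
  have hpow : Q ^ (k + 1) * Q ^ ((m : ℤ) - k) = Q ^ (m + 1) := by
    rw [← zpow_add' (.inr (.inl (by omega))), ← zpow_natCast]
    push_cast; ring_nf
  simp only [gaussBinom, qPochhammer_succ]
  rw [show ((m + 1 : ℕ) : ℤ) - (k + 1) = m - k by push_cast; ring, ← hk, ← hmk, ← hpow]
  ring

variable {p : K}

lemma hasFiniteSupport_zpow_sq_mul_gaussBinom (m : ℕ) (c : ℤ) :
    HasFiniteSupport fun j : ℤ => p ^ (j ^ 2) * gaussBinom (p ^ 2) m (j + c) := by
  refine (Set.finite_Icc (-c) (m - c)).subset fun j hj => ?_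
  by_contra hj'
  rw [Set.mem_Icc, not_and_or] at hj'
  apply hj
  dsimp only
  rcases hj' with h | h
  · rw [gaussBinom_of_neg (by omega), mul_zero]
  · rw [gaussBinom_of_lt (by omega), mul_zero]

lemma zpow_sq_mul_gaussBinom_two_mul_add_one (hQ : ∀ i : ℕ, (p ^ 2) ^ (i + 1) ≠ 1)
    (n : ℕ) (j : ℤ) :
    p ^ (j ^ 2) * gaussBinom (p ^ 2) (2 * n + 1) (j + (n + 1 : ℕ)) =
      p ^ (j ^ 2) * gaussBinom (p ^ 2) (2 * n) (j + n) +
        p ^ (2 * n + 1) * (p ^ ((j + 1) ^ 2) * gaussBinom (p ^ 2) (2 * n) (j + 1 + n)) := by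
  have hpow : p ^ (j ^ 2) * (p ^ 2) ^ (j + n + 1) = p ^ ((j + 1) ^ 2) * p ^ (2 * n + 1) := by
    rw [← zpow_natCast p 2, ← zpow_mul, ← zpow_natCast p (2 * n + 1)]
    exact zpow_mul_zpow_of_add_eq p (by push_cast; ring) (by positivity)
  rw [show j + ((n + 1 : ℕ) : ℤ) = j + n + 1 by push_cast; ring, gaussBinom_succ_succ' hQ,
    show j + 1 + (n : ℤ) = j + n + 1 by ring]
  linear_combination gaussBinom (p ^ 2) (2 * n) (j + n + 1) * hpow

lemma zpow_sq_mul_gaussBinom_two_mul_add_two (hQ : ∀ i : ℕ, (p ^ 2) ^ (i + 1) ≠ 1)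
    (n : ℕ) (j : ℤ) :
    p ^ (j ^ 2) * gaussBinom (p ^ 2) (2 * (n + 1)) (j + (n + 1 : ℕ)) =
      p ^ (j ^ 2) * gaussBinom (p ^ 2) (2 * n + 1) (j + (n + 1 : ℕ)) +
        p ^ (2 * n + 1) *
          (p ^ ((j + -1) ^ 2) * gaussBinom (p ^ 2) (2 * n + 1) (j + -1 + (n + 1 : ℕ))) := by
  have hpow : p ^ (j ^ 2) * (p ^ 2) ^ (((2 * n + 1 : ℕ) : ℤ) - (j + n)) =
      p ^ ((j + -1) ^ 2) * p ^ (2 * n + 1) := by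
    rw [← zpow_natCast p 2, ← zpow_mul, ← zpow_natCast p (2 * n + 1)]
    exact zpow_mul_zpow_of_add_eq p (by push_cast; ring) (by positivity)
  rw [show 2 * (n + 1) = 2 * n + 1 + 1 by ring,
    show j + ((n + 1 : ℕ) : ℤ) = j + n + 1 by push_cast; ring, gaussBinom_succ_succ hQ,
    show j + -1 + ((n + 1 : ℕ) : ℤ) = j + n by push_cast; ring]
  linear_combination gaussBinom (p ^ 2) (2 * n + 1) (j + n) * hpow

lemma finsum_zpow_sq_mul_gaussBinom (hQ : ∀ i : ℕ, (p ^ 2) ^ (i + 1) ≠ 1) (n : ℕ) :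
    ∑ᶠ j : ℤ, p ^ (j ^ 2) * gaussBinom (p ^ 2) (2 * n) (j + n) =
      (∏ k ∈ Finset.range n, (1 + p ^ (2 * k + 1))) ^ 2 := by
  induction n with
  | zero =>
    rw [finsum_eq_single _ 0 fun j hj => by
      rcases hj.lt_or_gt with hj | hj
      · rw [gaussBinom_of_neg (by omega), mul_zero]
      · rw [gaussBinom_of_lt (by omega), mul_zero]]
    simp [gaussBinom, qPochhammerInv, qPochhammer]
  | succ n ih =>
    have hodd : ∑ᶠ j : ℤ, p ^ (j ^ 2) * gaussBinom (p ^ 2) (2 * n + 1) (j + (n + 1 : ℕ)) =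
        (1 + p ^ (2 * n + 1)) * ∑ᶠ j : ℤ, p ^ (j ^ 2) * gaussBinom (p ^ 2) (2 * n) (j + n) := by
      simp_rw [zpow_sq_mul_gaussBinom_two_mul_add_one hQ]
      exact finsum_add_mul_comp_add (hasFiniteSupport_zpow_sq_mul_gaussBinom _ _) _ 1
    simp_rw [zpow_sq_mul_gaussBinom_two_mul_add_two hQ,
      finsum_add_mul_comp_add (hasFiniteSupport_zpow_sq_mul_gaussBinom _ _), hodd, ih,
      Finset.prod_range_succ]
    ring

end Field

section NormedField

variable [NormedField K] {Q : K}

lemma summable_norm_pow_succ (hQ : ‖Q‖ < 1) : Summable fun i : ℕ => ‖Q ^ (i + 1)‖ := by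
  simpa [norm_pow] using
    (summable_nat_add_iff 1).2 (summable_geometric_of_lt_one (norm_nonneg Q) hQ)

lemma summable_norm_pow_two_mul_add_one (hQ : ‖Q‖ < 1) :
    Summable fun k : ℕ => ‖Q ^ (2 * k + 1)‖ :=
  (summable_norm_pow_succ hQ).comp_injective (mul_right_injective₀ two_ne_zero)

lemma pow_succ_ne_one_of_norm_lt_one (hQ : ‖Q‖ < 1) (i : ℕ) : Q ^ (i + 1) ≠ 1 := fun h => by
  have := pow_lt_one₀ (norm_nonneg Q) hQ i.succ_ne_zero
  rw [← norm_pow, h, norm_one] at this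
  exact this.false

lemma norm_zpow_sq_le {p : K} (hp : ‖p‖ ≤ 1) (j : ℤ) : ‖p ^ (j ^ 2)‖ ≤ ‖p‖ ^ j.natAbs := by
  rw [norm_zpow, ← Int.natAbs_sq, ← Nat.cast_pow, zpow_natCast]
  exact pow_le_pow_of_le_one (norm_nonneg _) hp (Nat.le_self_pow two_ne_zero _)

lemma summable_pow_natAbs {r : ℝ} (hr0 : 0 ≤ r) (hr : r < 1) :
    Summable fun j : ℤ => r ^ j.natAbs := by
  apply Summable.of_nat_of_neg <;> simpa using summable_geometric_of_lt_one hr0 hr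

variable [CompleteSpace K]

lemma tprod_one_sub_pow_succ_ne_zero (hQ : ‖Q‖ < 1) : ∏' i : ℕ, (1 - Q ^ (i + 1)) ≠ 0 := by
  simpa [sub_eq_add_neg] using tprod_one_add_ne_zero_of_summable (f := fun i => -Q ^ (i + 1))
    (fun i => by
      rw [← sub_eq_add_neg, sub_ne_zero]
      exact (pow_succ_ne_one_of_norm_lt_one hQ i).symm)
    (by simpa using summable_norm_pow_succ hQ)

lemma tendsto_qPochhammer (hQ : ‖Q‖ < 1) :
    Tendsto (qPochhammer Q) atTop (𝓝 (∏' i : ℕ, (1 - Q ^ (i + 1)))) :=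
  (multipliable_one_sub_of_summable (R := K) (summable_norm_pow_succ hQ)).hasProd.tendsto_prod_nat

lemma tendsto_qPochhammerInv (hQ : ‖Q‖ < 1) :
    Tendsto (qPochhammerInv Q) atTop (𝓝 (∏' i : ℕ, (1 - Q ^ (i + 1)))⁻¹) := by
  have htoNat : Tendsto Int.toNat atTop atTop :=
    tendsto_atTop_atTop.2 fun b => ⟨b, fun k hk => by omega⟩
  refine (((tendsto_qPochhammer hQ).inv₀ (tprod_one_sub_pow_succ_ne_zero hQ)).comp htoNat).congr' ?_
  filter_upwards [eventually_ge_atTop 0] with k hk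
  simp [qPochhammerInv, hk]

lemma exists_norm_gaussBinom_le (hQ : ‖Q‖ < 1) : ∃ C, ∀ m k, ‖gaussBinom Q m k‖ ≤ C := by
  obtain ⟨A, hA⟩ := isBounded_iff_forall_norm_le.1
    (Metric.isBounded_range_of_tendsto _ (tendsto_qPochhammer hQ))
  obtain ⟨B, hB⟩ := isBounded_iff_forall_norm_le.1 (Metric.isBounded_range_of_tendsto _
    ((tendsto_qPochhammer hQ).inv₀ (tprod_one_sub_pow_succ_ne_zero hQ)))
  have hA0 : 0 ≤ A := (norm_nonneg _).trans (hA _ ⟨0, rfl⟩)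
  have hB0 : 0 ≤ B := (norm_nonneg _).trans (hB _ ⟨0, rfl⟩)
  have hInv (k : ℤ) : ‖qPochhammerInv Q k‖ ≤ B := by
    unfold qPochhammerInv
    split_ifs
    · exact hB _ ⟨_, rfl⟩
    · simpa using hB0
  refine ⟨A * B * B, fun m k => ?_⟩
  rw [gaussBinom, norm_mul, norm_mul]
  exact mul_le_mul (mul_le_mul (hA _ ⟨m, rfl⟩) (hInv k) (norm_nonneg _) hA0) (hInv _)
    (norm_nonneg _) (mul_nonneg hA0 hB0)

lemma tendsto_gaussBinom_two_mul (hQ : ‖Q‖ < 1) (j : ℤ) :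
    Tendsto (fun n : ℕ => gaussBinom Q (2 * n) (j + n)) atTop
      (𝓝 (∏' i : ℕ, (1 - Q ^ (i + 1)))⁻¹) := by
  have hInv (c : ℤ) : Tendsto (fun n : ℕ => qPochhammerInv Q (c + n)) atTop
      (𝓝 (∏' i : ℕ, (1 - Q ^ (i + 1)))⁻¹) :=
    (tendsto_qPochhammerInv hQ).comp
      (tendsto_atTop_add_const_left _ c tendsto_natCast_atTop_atTop)
  have hcompl : Tendsto (fun n : ℕ => qPochhammerInv Q (((2 * n : ℕ) : ℤ) - (j + n))) atTop
      (𝓝 (∏' i : ℕ, (1 - Q ^ (i + 1)))⁻¹) := by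
    simpa only [show ∀ n : ℕ, ((2 * n : ℕ) : ℤ) - (j + n) = -j + n from fun n => by
      push_cast; ring] using hInv (-j)
  have h := (((tendsto_qPochhammer hQ).comp (tendsto_id.const_mul_atTop' two_pos)).mul
    (hInv j)).mul hcompl
  rw [mul_inv_cancel₀ (tprod_one_sub_pow_succ_ne_zero hQ), one_mul] at h
  exact h

theorem tsum_zpow_sq_eq_tprod {p : K} (hp : ‖p‖ < 1) :
    ∑' j : ℤ, p ^ (j ^ 2) =
      (∏' k : ℕ, (1 + p ^ (2 * k + 1))) ^ 2 * ∏' i : ℕ, (1 - (p ^ 2) ^ (i + 1)) := by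
  have hQ : ‖p ^ 2‖ < 1 := by
    rw [norm_pow]; exact pow_lt_one₀ (norm_nonneg _) hp two_ne_zero
  obtain ⟨C, hC⟩ := exists_norm_gaussBinom_le hQ
  have hbound (n : ℕ) (j : ℤ) :
      ‖p ^ (j ^ 2) * gaussBinom (p ^ 2) (2 * n) (j + n)‖ ≤ ‖p‖ ^ j.natAbs * C := by
    rw [norm_mul]
    exact mul_le_mul (norm_zpow_sq_le hp.le j) (hC _ _) (norm_nonneg _) (by positivity)
  have hlim := tendsto_tsum_of_dominated_convergence
    ((summable_pow_natAbs (norm_nonneg p) hp).mul_right C)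
    (fun j => (tendsto_gaussBinom_two_mul hQ j).const_mul (p ^ (j ^ 2)))
    (Eventually.of_forall hbound)
  have hprod : Tendsto (fun n : ℕ => ∑' j : ℤ, p ^ (j ^ 2) * gaussBinom (p ^ 2) (2 * n) (j + n))
      atTop (𝓝 ((∏' k : ℕ, (1 + p ^ (2 * k + 1))) ^ 2)) := by
    simp_rw [tsum_eq_finsum (hasFiniteSupport_zpow_sq_mul_gaussBinom _ _),
      finsum_zpow_sq_mul_gaussBinom (pow_succ_ne_one_of_norm_lt_one hQ)]
    exact ((multipliable_one_add_of_summable (R := K)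
      (summable_norm_pow_two_mul_add_one hp)).hasProd.tendsto_prod_nat).pow 2
  rw [← tendsto_nhds_unique hlim hprod, tsum_mul_right,
    inv_mul_cancel_right₀ (tprod_one_sub_pow_succ_ne_zero hQ)]

end NormedField

/-- For |q| < 1, φ(-q) = Σ_{k∈ℤ} (-q)^{k²} equals (q;q)_∞² / (q²;q²)_∞. -/
theorem phi_neg_product (q : ℂ) (hq : ‖q‖ < 1) :
    (∑' k : ℤ, (-q) ^ (k ^ 2)) =
      (∏' k : ℕ, (1 - q * q ^ k)) ^ 2 / (∏' k : ℕ, (1 - q ^ 2 * (q ^ 2) ^ k)) := by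
  have hq2 : ‖q ^ 2‖ < 1 := by
    rw [norm_pow]; exact pow_lt_one₀ (norm_nonneg _) hq two_ne_zero
  have hgauss := tsum_zpow_sq_eq_tprod (p := -q) (by rwa [norm_neg])
  simp only [neg_sq, Odd.neg_pow (odd_two_mul_add_one _), ← sub_eq_add_neg] at hgauss
  have hodd : Multipliable fun k : ℕ => 1 - q * q ^ (2 * k) := by
    convert multipliable_one_sub_of_summable (R := ℂ) (summable_norm_pow_two_mul_add_one hq)
      using 3
    ring
  have heven : Multipliable fun k : ℕ => 1 - q * q ^ (2 * k + 1) := by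
    convert multipliable_one_sub_of_summable (R := ℂ) (summable_norm_pow_succ hq2) using 3
    ring
  rw [hgauss, ← tprod_even_mul_odd (f := fun k => 1 - q * q ^ k) hodd heven]
  simp only [← pow_succ', show ∀ k : ℕ, q ^ (2 * k + 1 + 1) = (q ^ 2) ^ (k + 1) from fun k => by
    ring]
  field_simp [tprod_one_sub_pow_succ_ne_zero hq2]
end

section
/- Let ξ(q) := φ(-q⁹)/φ(-q) and let U be the operator sending Σ aₙ qⁿ to Σ a_{3n} qⁿ. Then U(ξ³) = ξ - 12ξ² + 66ξ³ - 216ξ⁴ + 486ξ⁵ - 810ξ⁶ + 972ξ⁷ - 729ξ⁸ + 243ξ⁹. -/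
open PowerSeries

/-- φ(-q) = Σ_{k∈ℤ} (-1)^k q^{k²} as a formal power series over ℤ. -/
noncomputable def phiNeg : PowerSeries ℤ :=
  PowerSeries.mk fun n =>
    if n = 0 then 1 else if Nat.sqrt n ^ 2 = n then 2 * (-1) ^ Nat.sqrt n else 0

open Classical in
/-- ψ(q) = Σ_{k≥0} q^{k(k+1)/2} as a formal power series over ℤ. -/
noncomputable def psi : PowerSeries ℤ :=
  PowerSeries.mk fun n =>
    if ∃ k ∈ Finset.range (n + 1), k * (k + 1) / 2 = n then 1 else 0

/-- Substitution q ↦ q^d in a formal power series. -/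
noncomputable def expand (d : ℕ) (f : PowerSeries ℤ) : PowerSeries ℤ :=
  PowerSeries.mk fun n => if d ∣ n then PowerSeries.coeff (n / d) f else 0

/-- The 3-dissection operator U(Σ aₙ qⁿ) = Σ a_{3n} qⁿ. -/
noncomputable def U (f : PowerSeries ℤ) : PowerSeries ℤ :=
  PowerSeries.mk fun n => PowerSeries.coeff (3 * n) f

/-- The multiplicative inverse of φ(-q) (constant coefficient 1). -/
noncomputable def phiNegInv : PowerSeries ℤ := PowerSeries.invOfUnit phiNeg 1

/-- The multiplicative inverse of ψ(q) (constant coefficient 1). -/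
noncomputable def psiInv : PowerSeries ℤ := PowerSeries.invOfUnit psi 1

/-- ph₃(n): coefficients of φ(-q³)/φ(-q). -/
noncomputable def ph3 (n : ℕ) : ℤ :=
  PowerSeries.coeff n (expand 3 phiNeg * phiNegInv)

/-- ps₃(n): coefficients of ψ(q³)/ψ(q). -/
noncomputable def ps3 (n : ℕ) : ℤ :=
  PowerSeries.coeff n (expand 3 psi * psiInv)

/-- ξ(q) := φ(-q⁹)/φ(-q). -/
noncomputable def xi : PowerSeries ℤ := expand 9 phiNeg * phiNegInv

/-- F(q) := φ(-q³)/φ(-q). -/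
noncomputable def Fph : PowerSeries ℤ := expand 3 phiNeg * phiNegInv

/-- γ(q) := F(q)/F(q⁹). -/
noncomputable def gam : PowerSeries ℤ := Fph * PowerSeries.invOfUnit (expand 9 Fph) 1

/-- G(q) := ψ(q³)/ψ(q). -/
noncomputable def Gps : PowerSeries ℤ := expand 3 psi * psiInv

/-- ζ(q) := q·ψ(q⁹)/ψ(q). -/
noncomputable def zeta : PowerSeries ℤ := PowerSeries.X * expand 9 psi * psiInv


/-!
Write `t = φ(-q⁹)` and `s = Σ_{x ≡ 1 (3)} (-1)^x q^{x²} = q B(q³)`. Splitting the summation index of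
`φ(-q) = Σ (-1)^x q^{x²}` by its residue mod 3 gives `φ(-q) = t + 2s`, so `ξ = t / (t + 2s)`.

Four-square counting gives `φ(-q³)⁴ = t⁴ + 8 s³ t`: the map `y ↦ M y` with `Mᵀ M = 3` sends the
representations of `m` as a sum of four squares bijectively onto the representations of `3m` by
vectors whose residues mod 3 form a word of the tetracode; the zero word contributes `t⁴`, and the
eight nonzero words are equivalent under signed permutations to `(1, 1, 1, 0)`, which contributes
`s³ t`. With `F = φ(-q³)/φ(-q)` this identity becomes `F⁴ = 3ξ³ - 3ξ² + ξ`; read at `q` instead of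
`q³` it becomes `φ(-q)⁴ = φ(-q³)⁴ + 8 q B(q)³ φ(-q³)`.

Rationalising, `ξ = t (t² - 2ts + 4s²) / (t³ + 8s³)`. Here `t` and `s³` are series in `q³` and
`s = q B(q³)`, so `U` acts on `ξ³` through the terms of degree `0, 3, 6` in `s`. Together with the
second form of the four-square identity this gives `U(ξ³) = 9F¹² - 9F⁸ + F⁴`. Substituting
`F⁴ = 3ξ³ - 3ξ² + ξ` finishes the proof.
-/

local notation "expand₃" => PowerSeries.expand 3 three_ne_zero

section Trisection

variable {R : Type*} [CommRing R]

theorem expand_eq_powerSeries_expand (d : ℕ) (hd : d ≠ 0) (f : ℤ⟦X⟧) :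
    expand d f = PowerSeries.expand d hd f := by
  ext n
  rw [PowerSeries.coeff_expand]
  exact coeff_mk _ _

theorem expand_nine_eq (f : ℤ⟦X⟧) : expand 9 f = expand₃ (expand₃ f) := by
  rw [expand_eq_powerSeries_expand 9 (by norm_num), ← PowerSeries.expand_mul]

theorem coeff_U (n : ℕ) (f : ℤ⟦X⟧) : coeff n (U f) = coeff (3 * n) f := coeff_mk _ _

theorem coeff_X_mul' (n : ℕ) (f : R⟦X⟧) :
    coeff n (X * f) = if 1 ≤ n then coeff (n - 1) f else 0 := by
  simpa using PowerSeries.coeff_X_pow_mul' f 1 n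

noncomputable def trisect (j : ℕ) (f : R⟦X⟧) : R⟦X⟧ := mk fun n ↦ coeff (3 * n + j) f

theorem eq_expand_add_X_mul_expand_add_X_sq_mul_expand (f : R⟦X⟧) :
    f = expand₃ (trisect 0 f) + X * expand₃ (trisect 1 f) + X ^ 2 * expand₃ (trisect 2 f) := by
  ext n
  rw [map_add, map_add, coeff_X_mul', PowerSeries.coeff_X_pow_mul',
    PowerSeries.coeff_expand, PowerSeries.coeff_expand, PowerSeries.coeff_expand]
  simp only [trisect, coeff_mk]
  obtain ⟨m, rfl | rfl | rfl⟩ : ∃ m, n = 3 * m ∨ n = 3 * m + 1 ∨ n = 3 * m + 2 :=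
    ⟨n / 3, by omega⟩
  all_goals split_ifs <;> first | (exfalso; omega) | (simp only [add_zero, zero_add]; congr 2; omega)

theorem U_expand_add_X_mul_expand_add_X_sq_mul_expand (f₀ f₁ f₂ : ℤ⟦X⟧) :
    U (expand₃ f₀ + X * expand₃ f₁ + X ^ 2 * expand₃ f₂) = f₀ := by
  ext n
  rw [coeff_U, map_add, map_add, PowerSeries.coeff_expand_mul, coeff_X_mul',
    PowerSeries.coeff_X_pow_mul', PowerSeries.coeff_expand, PowerSeries.coeff_expand]
  split_ifs <;> first | rfl | (exfalso; omega) | simp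

theorem U_expand (f : ℤ⟦X⟧) : U (expand₃ f) = f := by
  simpa using U_expand_add_X_mul_expand_add_X_sq_mul_expand f 0 0

theorem U_mul_expand (f g : ℤ⟦X⟧) : U (f * expand₃ g) = U f * g := by
  conv_lhs => rw [eq_expand_add_X_mul_expand_add_X_sq_mul_expand f]
  convert U_expand_add_X_mul_expand_add_X_sq_mul_expand (trisect 0 f * g) (trisect 1 f * g)
    (trisect 2 f * g) using 2
  · simp only [map_mul]
    ring
  · rfl

end Trisection

section Theta

open Finset

variable {k : ℕ}

open Classical in
noncomputable def reps (P : (Fin k → ℤ) → Prop) (n : ℕ) : Finset (Fin k → ℤ) :=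
  {y ∈ Fintype.piFinset fun _ ↦ Icc (-(n : ℤ)) n | P y ∧ ∑ i, y i ^ 2 = n}

theorem mem_reps {P : (Fin k → ℤ) → Prop} {n : ℕ} {y : Fin k → ℤ} :
    y ∈ reps P n ↔ P y ∧ ∑ i, y i ^ 2 = n := by
  simp only [reps, mem_filter, Fintype.mem_piFinset, mem_Icc, and_iff_right_iff_imp]
  rintro ⟨-, hy⟩ i
  have hle : y i ^ 2 ≤ ∑ j, y j ^ 2 := single_le_sum (fun j _ ↦ sq_nonneg (y j)) (mem_univ i)
  have := Int.le_self_sq (y i)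
  have := Int.le_self_sq (-y i)
  constructor <;> nlinarith

open Classical in
noncomputable def sqrtsIn (S : ℤ → Prop) (n : ℕ) : Finset ℤ :=
  {x ∈ Icc (-(n : ℤ)) n | S x ∧ x ^ 2 = n}

theorem mem_sqrtsIn {S : ℤ → Prop} {n : ℕ} {x : ℤ} : x ∈ sqrtsIn S n ↔ S x ∧ x ^ 2 = n := by
  simp only [sqrtsIn, mem_filter, mem_Icc, and_iff_right_iff_imp]
  rintro ⟨-, hx⟩
  have := Int.le_self_sq x
  have := Int.le_self_sq (-x)
  constructor <;> nlinarith

/-- `Σ_{x ∈ S} (-1)^x q^{x²}`, with the sign written as `(-1)^{x²}`. -/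
noncomputable def thetaOn (S : ℤ → Prop) : ℤ⟦X⟧ := mk fun n ↦ (-1) ^ n * #(sqrtsIn S n)

theorem card_reps_forall_succ (S : Fin (k + 1) → ℤ → Prop) (n : ℕ) :
    #(reps (fun y ↦ ∀ i, S i (y i)) n) =
      ∑ p ∈ antidiagonal n, #(sqrtsIn (S 0) p.1) * #(reps (fun y ↦ ∀ i, S i.succ (y i)) p.2) := by
  rw [card_eq_sum_card_fiberwise (f := fun y ↦ ((y 0 ^ 2).toNat, (∑ i : Fin k, y i.succ ^ 2).toNat))
    (t := antidiagonal n)]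
  · refine sum_congr rfl fun p hp ↦ ?_
    rw [HasAntidiagonal.mem_antidiagonal] at hp
    rw [← card_product]
    refine card_nbij' (fun y ↦ (y 0, Fin.tail y)) (fun x ↦ Fin.cons x.1 x.2) ?_ ?_ ?_ ?_
    · intro y hy
      simp only [coe_filter, Set.mem_ofPred_eq, mem_reps, Fin.forall_fin_succ, Fin.sum_univ_succ,
        Prod.ext_iff] at hy
      simp only [coe_product, Set.mem_prod, mem_coe, mem_sqrtsIn, mem_reps, Fin.tail]
      have := sq_nonneg (y 0)
      have : 0 ≤ ∑ i : Fin k, y i.succ ^ 2 := sum_nonneg fun i _ ↦ sq_nonneg _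
      exact ⟨⟨hy.1.1.1, by omega⟩, hy.1.1.2, by omega⟩
    · rintro ⟨x, z⟩ hxz
      simp only [coe_product, Set.mem_prod, mem_coe, mem_sqrtsIn, mem_reps] at hxz
      simp only [coe_filter, Set.mem_ofPred_eq, mem_reps, Fin.forall_fin_succ, Fin.sum_univ_succ,
        Fin.cons_zero, Fin.cons_succ, Prod.ext_iff]
      exact ⟨⟨⟨hxz.1.1, hxz.2.1⟩, by omega⟩, by omega, by omega⟩
    · intro y _
      exact Fin.cons_self_tail y
    · rintro ⟨x, z⟩ _
      simp
  · intro y hy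
    simp only [mem_coe, mem_reps, Fin.sum_univ_succ] at hy
    simp only [mem_coe, HasAntidiagonal.mem_antidiagonal]
    have := sq_nonneg (y 0)
    have : 0 ≤ ∑ i : Fin k, y i.succ ^ 2 := sum_nonneg fun i _ ↦ sq_nonneg _
    omega

theorem coeff_prod_thetaOn (S : Fin k → ℤ → Prop) (n : ℕ) :
    coeff n (∏ i, thetaOn (S i)) = (-1) ^ n * #(reps (fun y ↦ ∀ i, S i (y i)) n) := by
  induction k generalizing n with
  | zero =>
    rcases n with _ | n
    · rw [card_eq_one.mpr ⟨![], eq_singleton_iff_unique_mem.mpr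
        ⟨by simp [mem_reps], fun y _ ↦ Subsingleton.elim _ _⟩⟩]
      simp
    · rw [card_eq_zero.mpr (eq_empty_of_forall_notMem fun y hy ↦ by simp [mem_reps] at hy; omega)]
      simp [coeff_one]
  | succ k ih =>
    rw [Fin.prod_univ_succ, coeff_mul, card_reps_forall_succ, Nat.cast_sum, mul_sum]
    refine sum_congr rfl fun p hp ↦ ?_
    rw [ih, thetaOn, coeff_mk, ← HasAntidiagonal.mem_antidiagonal.mp hp, pow_add]
    push_cast
    ring

theorem thetaOn_true_eq_sum {α : Type*} [Fintype α] [DecidableEq α] (f : ℤ → α) :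
    thetaOn (fun _ ↦ True) = ∑ a, thetaOn fun x ↦ f x = a := by
  ext n
  simp only [thetaOn, map_sum, coeff_mk, ← mul_sum, ← Nat.cast_sum]
  rw [card_eq_sum_card_fiberwise (f := f) (t := univ) fun _ _ ↦ mem_coe.mpr (mem_univ _)]
  congr 3 with a
  congr 1
  ext x
  simp [mem_sqrtsIn, and_comm]

theorem thetaOn_comp_neg (S : ℤ → Prop) : thetaOn (fun x ↦ S (-x)) = thetaOn S := by
  ext n
  simp only [thetaOn, coeff_mk]
  congr 2
  refine card_nbij' (fun x ↦ -x) (fun x ↦ -x) ?_ ?_ ?_ ?_ <;> intro x hx <;>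
    simp_all [mem_sqrtsIn]

end Theta

section PhiNeg

open Finset

theorem neg_one_pow_sq {M : Type*} [Monoid M] [HasDistribNeg M] (r : ℕ) :
    (-1 : M) ^ (r ^ 2) = (-1) ^ r := by
  rw [sq, pow_mul]
  rcases neg_one_pow_eq_or M r with h | h <;> simp [h]

theorem Int.sq_eq_natCast_iff {x : ℤ} {n : ℕ} :
    x ^ 2 = n ↔ Nat.sqrt n ^ 2 = n ∧ (x = Nat.sqrt n ∨ x = -Nat.sqrt n) := by
  constructor
  · intro hx
    have hn : x.natAbs ^ 2 = n := by exact_mod_cast (Int.natAbs_sq x).trans hx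
    rw [← hn, Nat.sqrt_eq']
    exact ⟨rfl, Int.natAbs_eq x⟩
  · rintro ⟨hn, hx⟩
    have : x ^ 2 = (Nat.sqrt n : ℤ) ^ 2 := by rcases hx with rfl | rfl <;> ring
    rw [this]
    exact_mod_cast hn

theorem phiNeg_eq_thetaOn : phiNeg = thetaOn fun _ ↦ True := by
  ext n
  have hroots : sqrtsIn (fun _ ↦ True) n =
      if Nat.sqrt n ^ 2 = n then {(Nat.sqrt n : ℤ), -(Nat.sqrt n : ℤ)} else ∅ := by
    ext x
    rw [mem_sqrtsIn, Int.sq_eq_natCast_iff]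
    split_ifs with h <;> simp [h]
  rw [phiNeg, thetaOn, coeff_mk, coeff_mk, hroots]
  split_ifs with h0 hr hr
  · simp [h0]
  · subst h0
    simp at hr
  · have hr0 : (Nat.sqrt n : ℤ) ≠ -(Nat.sqrt n : ℤ) := by
      have : Nat.sqrt n ≠ 0 := by
        rintro h
        rw [h] at hr
        omega
      omega
    have hsign := neg_one_pow_sq (M := ℤ) (Nat.sqrt n)
    rw [hr] at hsign
    rw [card_pair hr0, hsign]
    push_cast
    ring
  · simp

theorem phiNeg_ne_zero : phiNeg ≠ 0 := fun h ↦ by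
  simpa [phiNeg] using congrArg (coeff 0) h

theorem phiNeg_mul_phiNegInv : phiNeg * phiNegInv = 1 :=
  PowerSeries.mul_invOfUnit _ _ (by simp [phiNeg])

noncomputable def residueTheta (a : ZMod 3) : ℤ⟦X⟧ := thetaOn fun x ↦ (x : ZMod 3) = a

theorem residueTheta_two : residueTheta 2 = residueTheta 1 := by
  rw [residueTheta, residueTheta, ← thetaOn_comp_neg]
  congr with x
  push_cast
  generalize (x : ZMod 3) = a
  revert a
  decide

theorem phiNeg_eq_residueTheta : phiNeg = residueTheta 0 + 2 * residueTheta 1 := by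
  rw [phiNeg_eq_thetaOn, thetaOn_true_eq_sum (fun x : ℤ ↦ (x : ZMod 3))]
  refine (Fin.sum_univ_three fun a : ZMod 3 ↦ residueTheta a).trans ?_
  change residueTheta (0 : ZMod 3) + residueTheta 1 + residueTheta 2 = _
  rw [residueTheta_two]
  ring

theorem expand_nine_phiNeg : expand 9 phiNeg = residueTheta 0 := by
  ext n
  rw [_root_.expand, coeff_mk, residueTheta, thetaOn, coeff_mk]
  split_ifs with h9
  · obtain ⟨m, rfl⟩ := h9
    rw [Nat.mul_div_cancel_left m (by norm_num), phiNeg_eq_thetaOn, thetaOn, coeff_mk, pow_mul,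
      show (-1 : ℤ) ^ 9 = -1 by norm_num]
    congr 2
    refine card_nbij' (fun x ↦ 3 * x) (fun x ↦ x / 3) ?_ ?_ ?_ ?_ <;> intro x hx <;>
      simp only [mem_coe, mem_sqrtsIn] at hx ⊢
    · push_cast
      constructor
      · rw [show (3 : ZMod 3) = 0 by decide, zero_mul]
      · linear_combination 9 * hx.2
    · obtain ⟨k, rfl⟩ := (ZMod.intCast_zmod_eq_zero_iff_dvd x 3).mp hx.1
      push_cast at hx ⊢
      refine ⟨trivial, ?_⟩
      rw [Int.mul_ediv_cancel_left k (by norm_num)]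
      linarith [hx.2]
    · omega
    · obtain ⟨k, rfl⟩ := (ZMod.intCast_zmod_eq_zero_iff_dvd x 3).mp hx.1
      omega
  · rw [card_eq_zero.mpr (eq_empty_of_forall_notMem fun x hx ↦ ?_), Nat.cast_zero, mul_zero]
    rw [mem_sqrtsIn] at hx
    obtain ⟨k, rfl⟩ := (ZMod.intCast_zmod_eq_zero_iff_dvd x 3).mp hx.1
    refine h9 ⟨k.natAbs ^ 2, ?_⟩
    zify
    push_cast at hx
    linear_combination -hx.2 - 9 * sq_abs k

theorem residueTheta_zero_eq : residueTheta 0 = expand₃ (expand₃ phiNeg) := by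
  rw [← expand_nine_phiNeg, expand_nine_eq]

theorem coeff_residueTheta_eq_zero {a : ZMod 3} {n : ℕ} (h : (n : ZMod 3) ≠ a ^ 2) :
    coeff n (residueTheta a) = 0 := by
  rw [residueTheta, thetaOn, coeff_mk,
    card_eq_zero.mpr (eq_empty_of_forall_notMem fun x hx ↦ h ?_), Nat.cast_zero, mul_zero]
  obtain ⟨hxa, hxn⟩ := mem_sqrtsIn.mp hx
  rw [← hxa]
  exact_mod_cast (congrArg (Int.cast : ℤ → ZMod 3) hxn).symm

noncomputable def thetaOneTrisect : ℤ⟦X⟧ := trisect 1 (residueTheta 1)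

theorem residueTheta_one_eq : residueTheta 1 = X * expand₃ thetaOneTrisect := by
  have hcast (m j : ℕ) : ((3 * m + j : ℕ) : ZMod 3) = j := by
    push_cast
    rw [show (3 : ZMod 3) = 0 by decide, zero_mul, zero_add]
  have h₀ : trisect 0 (residueTheta 1) = 0 := by
    ext m
    exact coeff_residueTheta_eq_zero (by rw [hcast]; decide)
  have h₂ : trisect 2 (residueTheta 1) = 0 := by
    ext m
    exact coeff_residueTheta_eq_zero (by rw [hcast]; decide)
  conv_lhs => rw [eq_expand_add_X_mul_expand_add_X_sq_mul_expand (residueTheta 1), h₀, h₂]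
  simp [thetaOneTrisect]

end PhiNeg

section FourSquares

open Finset

variable {k : ℕ}

noncomputable def residueReps (c : Fin k → ZMod 3) (n : ℕ) : Finset (Fin k → ℤ) :=
  reps (fun y ↦ ∀ i, (y i : ZMod 3) = c i) n

theorem coeff_prod_residueTheta (c : Fin k → ZMod 3) (n : ℕ) :
    coeff n (∏ i, residueTheta (c i)) = (-1) ^ n * #(residueReps c n) :=
  coeff_prod_thetaOn _ n

theorem residueReps_eq_empty {c : Fin k → ZMod 3} {n : ℕ} (h : ∑ i, c i ^ 2 ≠ n) :
    residueReps c n = ∅ := by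
  refine eq_empty_of_forall_notMem fun y hy ↦ h ?_
  obtain ⟨hc, hn⟩ := mem_reps.mp hy
  have := congrArg (Int.cast : ℤ → ZMod 3) hn
  push_cast at this
  simpa only [hc] using this

theorem card_residueReps_signedPerm (σ : Equiv.Perm (Fin k)) (ε : Fin k → ℤˣ)
    (c : Fin k → ZMod 3) (n : ℕ) :
    #(residueReps c n) = #(residueReps (fun i ↦ ((ε i : ℤ) : ZMod 3) * c (σ i)) n) := by
  have hε (i : Fin k) : (ε i : ℤ) * ε i = 1 := Int.units_coe_mul_self (ε i)
  refine card_nbij' (fun y i ↦ ε i * y (σ i)) (fun z j ↦ ε (σ.symm j) * z (σ.symm j))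
    ?_ ?_ ?_ ?_ <;> intro y hy
  · simp only [residueReps, mem_coe, mem_reps] at hy ⊢
    refine ⟨fun i ↦ by push_cast; rw [hy.1], ?_⟩
    simp_rw [mul_pow, Int.isUnit_sq (ε _).isUnit, one_mul]
    rw [Equiv.sum_comp σ fun i ↦ y i ^ 2, hy.2]
  · simp only [residueReps, mem_coe, mem_reps] at hy ⊢
    refine ⟨fun j ↦ ?_, ?_⟩
    · push_cast
      rw [hy.1, Equiv.apply_symm_apply, ← mul_assoc, ← Int.cast_mul, hε, Int.cast_one, one_mul]
    · simp_rw [mul_pow, Int.isUnit_sq (ε _).isUnit, one_mul]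
      rw [Equiv.sum_comp σ.symm fun i ↦ y i ^ 2, hy.2]
  · funext j
    simp [← mul_assoc, hε]
  · funext i
    simp [← mul_assoc, hε]

/-- Multiplication by an integer matrix `M` with `Mᵀ M = 3`. It maps `ℤ⁴` onto `InTetraLattice`,
the vectors whose residues mod 3 form a tetracode word, with inverse `tetraMapInv = Mᵀ / 3`. -/
def tetraMap (y : Fin 4 → ℤ) : Fin 4 → ℤ :=
  ![y 0 - y 1 - y 2, y 0 + y 1 - y 3, y 0 + y 2 + y 3, y 1 - y 2 + y 3]

def tetraMapInv (z : Fin 4 → ℤ) : Fin 4 → ℤ :=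
  ![(z 0 + z 1 + z 2) / 3, (-z 0 + z 1 + z 3) / 3, (-z 0 + z 2 - z 3) / 3, (-z 1 + z 2 + z 3) / 3]

def InTetraLattice (z : Fin 4 → ℤ) : Prop := 3 ∣ z 0 + z 1 + z 2 ∧ 3 ∣ z 0 - z 1 - z 3

theorem sum_sq_tetraMap (y : Fin 4 → ℤ) : ∑ i, tetraMap y i ^ 2 = 3 * ∑ i, y i ^ 2 := by
  simp only [tetraMap, Fin.sum_univ_four, Matrix.cons_val]
  ring

theorem inTetraLattice_tetraMap (y : Fin 4 → ℤ) : InTetraLattice (tetraMap y) := by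
  simp only [InTetraLattice, tetraMap, Matrix.cons_val]
  omega

theorem tetraMapInv_tetraMap (y : Fin 4 → ℤ) : tetraMapInv (tetraMap y) = y := by
  funext i
  fin_cases i <;> simp [tetraMapInv, tetraMap] <;> omega

theorem tetraMap_tetraMapInv {z : Fin 4 → ℤ} (hz : InTetraLattice z) :
    tetraMap (tetraMapInv z) = z := by
  unfold InTetraLattice at hz
  funext i
  fin_cases i <;> simp [tetraMapInv, tetraMap] <;> omega

theorem card_reps_true_eq_card_reps_inTetraLattice (m : ℕ) :
    #(reps (fun _ : Fin 4 → ℤ ↦ True) m) = #(reps InTetraLattice (3 * m)) := by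
  refine card_nbij' tetraMap tetraMapInv ?_ ?_ ?_ ?_ <;> intro y hy <;>
    simp only [mem_coe, mem_reps] at hy ⊢
  · refine ⟨inTetraLattice_tetraMap y, ?_⟩
    rw [sum_sq_tetraMap, hy.2]
    push_cast
    ring
  · refine ⟨trivial, ?_⟩
    have h := sum_sq_tetraMap (tetraMapInv y)
    rw [tetraMap_tetraMapInv hy.1, hy.2] at h
    push_cast at h
    linarith
  · exact tetraMapInv_tetraMap y
  · exact tetraMap_tetraMapInv hy.1

/-- The ternary tetracode, parametrised by its first two coordinates. -/
def tetraWord (c : ZMod 3 × ZMod 3) : Fin 4 → ZMod 3 := ![c.1, c.2, -c.1 - c.2, c.1 - c.2]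

theorem inTetraLattice_and_iff (y : Fin 4 → ℤ) (c : ZMod 3 × ZMod 3) :
    InTetraLattice y ∧ ((y 0 : ZMod 3), (y 1 : ZMod 3)) = c ↔
      ∀ i, (y i : ZMod 3) = tetraWord c i := by
  have hdvd (a : ℤ) : 3 ∣ a ↔ (a : ZMod 3) = 0 := (ZMod.intCast_zmod_eq_zero_iff_dvd a 3).symm
  simp only [InTetraLattice, hdvd, Fin.forall_fin_succ, IsEmpty.forall_iff, and_true, tetraWord]
  push_cast
  generalize (y 0 : ZMod 3) = a, (y 1 : ZMod 3) = b, (y 2 : ZMod 3) = d, (y 3 : ZMod 3) = e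
  revert a b d e c
  decide

theorem card_reps_inTetraLattice (n : ℕ) :
    #(reps InTetraLattice n) = ∑ c, #(residueReps (tetraWord c) n) := by
  rw [card_eq_sum_card_fiberwise (f := fun y ↦ ((y 0 : ZMod 3), (y 1 : ZMod 3))) (t := univ)
    fun _ _ ↦ mem_coe.mpr (mem_univ _)]
  refine sum_congr rfl fun c _ ↦ congrArg card ?_
  ext y
  simp only [residueReps, mem_filter, mem_reps, ← inTetraLattice_and_iff]
  tauto

theorem card_residueReps_tetraWord {c : ZMod 3 × ZMod 3} (hc : c ≠ 0) (n : ℕ) :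
    #(residueReps (tetraWord c) n) = #(residueReps ![1, 1, 1, 0] n) := by
  -- A nonzero word has exactly one zero entry: swap it to the end, then flip the signs of the 2's.
  have normalize : ∀ c : ZMod 3 × ZMod 3, c ≠ 0 → ∃ j : Fin 4,
      (fun i ↦ (((if tetraWord c (Equiv.swap j 3 i) = 2 then -1 else 1 : ℤˣ) : ℤ) : ZMod 3) *
        tetraWord c (Equiv.swap j 3 i)) = ![1, 1, 1, 0] := by
    decide
  obtain ⟨j, hj⟩ := normalize c hc
  rw [card_residueReps_signedPerm (Equiv.swap j 3), hj]

theorem card_reps_true (m : ℕ) :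
    #(reps (fun _ : Fin 4 → ℤ ↦ True) m) =
      #(residueReps (0 : Fin 4 → ZMod 3) (3 * m)) + 8 * #(residueReps ![1, 1, 1, 0] (3 * m)) := by
  rw [card_reps_true_eq_card_reps_inTetraLattice, card_reps_inTetraLattice,
    ← add_sum_erase univ _ (mem_univ 0),
    sum_congr rfl fun c hc ↦ card_residueReps_tetraWord (ne_of_mem_erase hc) _, sum_const,
    card_erase_of_mem (mem_univ _), card_univ, smul_eq_mul]
  congr
  decide

theorem expand_phiNeg_pow_four :
    expand₃ (phiNeg ^ 4) = residueTheta 0 ^ 4 + 8 * (residueTheta 1 ^ 3 * residueTheta 0) := by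
  have hφ : phiNeg ^ 4 = ∏ _i : Fin 4, thetaOn fun _ ↦ True := by
    rw [Fin.prod_const, phiNeg_eq_thetaOn]
  have h₀ : residueTheta 0 ^ 4 = ∏ i : Fin 4, residueTheta ((0 : Fin 4 → ZMod 3) i) := by
    simp
  have h₁ : residueTheta 1 ^ 3 * residueTheta 0 =
      ∏ i : Fin 4, residueTheta ((![1, 1, 1, 0] : Fin 4 → ZMod 3) i) := by
    rw [Fin.prod_univ_four]
    simp only [Matrix.cons_val]
    ring
  ext n
  rw [map_add, show (8 : ℤ⟦X⟧) = C 8 from (map_ofNat C 8).symm, coeff_C_mul, h₀, h₁,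
    coeff_prod_residueTheta, coeff_prod_residueTheta, PowerSeries.coeff_expand]
  split_ifs with h3
  · obtain ⟨m, rfl⟩ := h3
    rw [Nat.mul_div_cancel_left m (by norm_num), hφ, coeff_prod_thetaOn]
    simp only [forall_const]
    rw [card_reps_true, pow_mul]
    push_cast
    ring
  · have hn : (n : ZMod 3) ≠ 0 := fun h ↦ h3 ((ZMod.natCast_eq_zero_iff n 3).mp h)
    rw [residueReps_eq_empty (by simpa using hn.symm),
      residueReps_eq_empty (by simp [Fin.sum_univ_four]; exact hn.symm)]
    simp

end FourSquares

theorem phiNeg_pow_four_eq :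
    phiNeg ^ 4 = expand₃ phiNeg ^ 4 + 8 * (X * thetaOneTrisect ^ 3) * expand₃ phiNeg := by
  have h : residueTheta 0 ^ 4 + 8 * (residueTheta 1 ^ 3 * residueTheta 0) =
      expand₃ (expand₃ phiNeg ^ 4 + 8 * (X * thetaOneTrisect ^ 3) * expand₃ phiNeg) := by
    rw [residueTheta_zero_eq, residueTheta_one_eq]
    simp only [map_add, map_mul, map_pow, map_ofNat, PowerSeries.expand_X]
    ring
  rw [← U_expand (phiNeg ^ 4), expand_phiNeg_pow_four, h, U_expand]

theorem xi_mul_phiNeg : xi * phiNeg = residueTheta 0 := by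
  rw [xi, mul_assoc, mul_comm phiNegInv, phiNeg_mul_phiNegInv, mul_one, expand_nine_phiNeg]

theorem Fph_mul_phiNeg : Fph * phiNeg = expand₃ phiNeg := by
  rw [Fph, mul_assoc, mul_comm phiNegInv, phiNeg_mul_phiNegInv, mul_one,
    expand_eq_powerSeries_expand]

theorem Fph_pow_four : Fph ^ 4 = 3 * xi ^ 3 - 3 * xi ^ 2 + xi := by
  apply mul_right_cancel₀ (pow_ne_zero 4 phiNeg_ne_zero)
  rw [← mul_pow, Fph_mul_phiNeg, ← map_pow, expand_phiNeg_pow_four,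
    show (3 * xi ^ 3 - 3 * xi ^ 2 + xi) * phiNeg ^ 4 =
      3 * (xi * phiNeg) ^ 3 * phiNeg - 3 * (xi * phiNeg) ^ 2 * phiNeg ^ 2 +
        (xi * phiNeg) * phiNeg ^ 3 by ring,
    xi_mul_phiNeg, phiNeg_eq_residueTheta]
  ring

theorem U_xi_cube_mul_cube :
    U (xi ^ 3) * (expand₃ phiNeg ^ 3 + 8 * (X * thetaOneTrisect ^ 3)) ^ 3 =
      expand₃ phiNeg ^ 9 - 56 * (X * thetaOneTrisect ^ 3) * expand₃ phiNeg ^ 6 +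
        64 * (X * thetaOneTrisect ^ 3) ^ 2 * expand₃ phiNeg ^ 3 := by
  have hφ := phiNeg_eq_residueTheta
  have ht := residueTheta_zero_eq
  have hs := residueTheta_one_eq
  have hxi := xi_mul_phiNeg
  set P := expand₃ phiNeg
  set t := residueTheta 0
  set s := residueTheta 1
  set b := thetaOneTrisect
  -- `t³ + 8s³ = φ(-q) (t² - 2ts + 4s²)` rationalises `ξ = t / (t + 2s)`.
  have hxiV : xi * expand₃ (P ^ 3 + 8 * (X * b ^ 3)) = t * (t ^ 2 - 2 * t * s + 4 * s ^ 2) := by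
    have hV : expand₃ (P ^ 3 + 8 * (X * b ^ 3)) = phiNeg * (t ^ 2 - 2 * t * s + 4 * s ^ 2) := by
      rw [hφ, ht, hs]
      simp only [map_add, map_mul, map_pow, map_ofNat, PowerSeries.expand_X]
      ring
    rw [hV, ← mul_assoc, hxi]
  -- The last two arguments collect the terms of degree `1, 4` and `2, 5` in `s = X b(q³)`.
  rw [← U_mul_expand, map_pow, ← mul_pow, hxiV,
    ← U_expand_add_X_mul_expand_add_X_sq_mul_expand
      (P ^ 9 - 56 * (X * b ^ 3) * P ^ 6 + 64 * (X * b ^ 3) ^ 2 * P ^ 3)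
      (-6 * b * P ^ 8 + 96 * X * b ^ 4 * P ^ 5) (24 * b ^ 2 * P ^ 7 - 96 * X * b ^ 5 * P ^ 4)]
  congr 1
  rw [ht, hs]
  simp only [map_add, map_sub, map_mul, map_pow, map_ofNat, map_neg, PowerSeries.expand_X]
  ring

theorem U_xi_cube_eq : U (xi ^ 3) = 9 * Fph ^ 12 - 9 * Fph ^ 8 + Fph ^ 4 := by
  set P := expand₃ phiNeg
  set V := P ^ 3 + 8 * (X * thetaOneTrisect ^ 3)
  have hVP : V * P = phiNeg ^ 4 := by
    rw [phiNeg_pow_four_eq]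
    ring
  have hF : Fph ^ 4 * (V * P) = P ^ 4 := by
    rw [hVP, ← mul_pow, Fph_mul_phiNeg]
  apply mul_right_cancel₀ (pow_ne_zero 12 phiNeg_ne_zero)
  rw [show phiNeg ^ 12 = (phiNeg ^ 4) ^ 3 by ring, ← hVP]
  linear_combination P ^ 3 * U_xi_cube_mul_cube - (9 * ((Fph ^ 4) ^ 2 * (V * P) ^ 2 +
    Fph ^ 4 * (V * P) * P ^ 4 + (P ^ 4) ^ 2) - 9 * (V * P) * (Fph ^ 4 * (V * P) + P ^ 4) +
      (V * P) ^ 2) * hF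

theorem U_xi_cube :
    U (xi ^ 3) = xi - 12 * xi ^ 2 + 66 * xi ^ 3 - 216 * xi ^ 4 + 486 * xi ^ 5
      - 810 * xi ^ 6 + 972 * xi ^ 7 - 729 * xi ^ 8 + 243 * xi ^ 9 := by
  rw [U_xi_cube_eq, show Fph ^ 12 = (Fph ^ 4) ^ 3 by ring, show Fph ^ 8 = (Fph ^ 4) ^ 2 by ring,
    Fph_pow_four]
  ring
end

section
/- Define integers Xᵢ(j) for i ≥ 1 by the initial data X₁ = (coefficients of ξ - 3ξ² + 3ξ³), X₂ = (coefficients of -2ξ + 9ξ² - 24ξ³ + 45ξ⁴ - 54ξ⁵ + 27ξ⁶), X₃ = (coefficients of ξ - 12ξ² + 66ξ³ - 216ξ⁴ + 486ξ⁵ - 810ξ⁶ + 972ξ⁷ - 729ξ⁸ + 243ξ⁹), and for i ≥ 4 by the polynomial recurrence Pᵢ = (x - 3x² + 3x³)(3P_{i-1} - 3P_{i-2} + P_{i-3}) in ℤ[x]. Then for every i ≥ 1, Xᵢ(j) = 0 whenever 0 ≤ j < ⌈i/3⌉. -/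
/-!
The factor `x - 3x² + 3x³` in the recurrence is divisible by `x`, so the `x`-adic order of
`Pᵢ` exceeds by one the least order among `Pᵢ₋₁, Pᵢ₋₂, Pᵢ₋₃`. Starting from order at least one
for `P₁, P₂, P₃`, induction gives `x ^ ⌈i/3⌉ ∣ Pᵢ`.
-/

open Polynomial

/-- The polynomials Pᵢ ∈ ℤ[x] encoding the modular equations for U(ξⁱ). -/
noncomputable def P : ℕ → Polynomial ℤ
  | 0 => 1
  | 1 => X - 3 * X ^ 2 + 3 * X ^ 3
  | 2 => -2 * X + 9 * X ^ 2 - 24 * X ^ 3 + 45 * X ^ 4 - 54 * X ^ 5 + 27 * X ^ 6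
  | 3 => X - 12 * X ^ 2 + 66 * X ^ 3 - 216 * X ^ 4 + 486 * X ^ 5 - 810 * X ^ 6
      + 972 * X ^ 7 - 729 * X ^ 8 + 243 * X ^ 9
  | (i + 4) => (X - 3 * X ^ 2 + 3 * X ^ 3) *
      (3 * P (i + 3) - 3 * P (i + 2) + P (i + 1))

section Recurrence

variable {R : Type*} [CommSemiring R] {x a c₁ c₂ c₃ : R} {p : ℕ → R}

theorem pow_div_three_dvd_of_recurrence (hx : x ∣ a)
    (hrec : ∀ n, p (n + 4) = a * (c₃ * p (n + 3) + c₂ * p (n + 2) + c₁ * p (n + 1)))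
    (h₁ : x ∣ p 1) (h₂ : x ∣ p 2) (h₃ : x ∣ p 3) :
    ∀ n, x ^ ((n + 2) / 3) ∣ p n
  | 0 => by simp
  | 1 => by simpa using h₁
  | 2 => by simpa using h₂
  | 3 => by simpa using h₃
  | n + 4 => by
    have d₁ : x ^ ((n + 3) / 3) ∣ p (n + 1) :=
      pow_div_three_dvd_of_recurrence hx hrec h₁ h₂ h₃ (n + 1)
    have d₂ : x ^ ((n + 3) / 3) ∣ p (n + 2) :=
      (pow_dvd_pow x (by omega)).trans
        (pow_div_three_dvd_of_recurrence hx hrec h₁ h₂ h₃ (n + 2))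
    have d₃ : x ^ ((n + 3) / 3) ∣ p (n + 3) :=
      (pow_dvd_pow x (by omega)).trans
        (pow_div_three_dvd_of_recurrence hx hrec h₁ h₂ h₃ (n + 3))
    rw [hrec n, show (n + 4 + 2) / 3 = (n + 3) / 3 + 1 by omega, pow_succ']
    exact mul_dvd_mul hx (dvd_add (dvd_add (d₃.mul_left _) (d₂.mul_left _)) (d₁.mul_left _))

end Recurrence

theorem P_add_four (n : ℕ) :
    P (n + 4) = (X - 3 * X ^ 2 + 3 * X ^ 3) *
      (3 * P (n + 3) + (-3) * P (n + 2) + 1 * P (n + 1)) := by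
  rw [P]
  ring

theorem X_pow_dvd_P (i : ℕ) : (X : ℤ[X]) ^ ((i + 2) / 3) ∣ P i :=
  pow_div_three_dvd_of_recurrence (X_dvd_iff.mpr (by simp)) P_add_four
    (X_dvd_iff.mpr (by simp [P])) (X_dvd_iff.mpr (by simp [P])) (X_dvd_iff.mpr (by simp [P])) i

theorem P_low_coeff_vanish_general (i j : ℕ) (hj : j < (i + 2) / 3) :
    (P i).coeff j = 0 :=
  X_pow_dvd_iff.mp (X_pow_dvd_P i) j hj

/-- For i ≥ 1, the coefficient of x^j in Pᵢ vanishes for j < ⌈i/3⌉. -/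
theorem P_low_coeff_vanish (i j : ℕ) (hi : 1 ≤ i) (hj : j < (i + 2) / 3) :
    (P i).coeff j = 0 :=
  P_low_coeff_vanish_general i j hj
end

section
/- With Pᵢ ∈ ℤ[x] defined by the recurrence Pᵢ = (x - 3x² + 3x³)(3P_{i-1} - 3P_{i-2} + P_{i-3}) for i ≥ 4 with initial polynomials P₁ = x-3x²+3x³, P₂ = -2x+9x²-24x³+45x⁴-54x⁵+27x⁶, P₃ = x-12x²+66x³-216x⁴+486x⁵-810x⁶+972x⁷-729x⁸+243x⁹, write dᵢ := ⌈i/3⌉ and Xᵢ(j) for the coefficient of x^j in Pᵢ. Then for every i ≥ 1, the 3-adic valuation of Xᵢ(dᵢ) is 0 (in particular Xᵢ(dᵢ) ≠ 0). -/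
/-!
Reduce modulo 3. The multiplier x - 3x² + 3x³ becomes x and the terms 3Pᵢ₋₁ - 3Pᵢ₋₂ vanish,
so the recurrence becomes Pᵢ ≡ x·Pᵢ₋₃; since P₁ ≡ P₂ ≡ P₃ ≡ x, this gives Pᵢ ≡ x^⌈i/3⌉ (mod 3),
whose coefficient at x^⌈i/3⌉ is 1.
-/

open Polynomial

local notation "π" => Polynomial.map (Int.castRingHom (ZMod 3))

lemma map_P_one : π (P 1) = X := by
  simp only [P, Polynomial.map_add, Polynomial.map_sub, Polynomial.map_mul, Polynomial.map_pow,
    map_X, Polynomial.map_ofNat]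
  reduce_mod_char

lemma map_P_two : π (P 2) = X := by
  simp only [P, Polynomial.map_add, Polynomial.map_sub, Polynomial.map_neg, Polynomial.map_mul,
    Polynomial.map_pow, map_X, Polynomial.map_ofNat]
  reduce_mod_char

lemma map_P_three : π (P 3) = X := by
  simp only [P, Polynomial.map_add, Polynomial.map_sub, Polynomial.map_mul, Polynomial.map_pow,
    map_X, Polynomial.map_ofNat]
  reduce_mod_char

lemma map_P_add_four (i : ℕ) : π (P (i + 4)) = X * π (P (i + 1)) := by
  simp only [P, Polynomial.map_add, Polynomial.map_sub, Polynomial.map_mul, Polynomial.map_pow,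
    map_X, Polynomial.map_ofNat]
  reduce_mod_char

lemma map_P_succ (i : ℕ) : π (P (i + 1)) = X ^ (i / 3 + 1) := by
  induction i using Nat.strong_induction_on with
  | _ i ih =>
    match i with
    | 0 => simpa using map_P_one
    | 1 => simpa using map_P_two
    | 2 => simpa using map_P_three
    | n + 3 => rw [map_P_add_four, ih n (by omega), Nat.add_div_right n three_pos, ← pow_succ']

/-- For i ≥ 1, the coefficient of x^{⌈i/3⌉} in Pᵢ has 3-adic valuation 0,
i.e., it is not divisible by 3 (in particular it is nonzero). -/
theorem P_lead_coeff_not_div_three (i : ℕ) (hi : 1 ≤ i) :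
    ¬ (3 : ℤ) ∣ (P i).coeff ((i + 2) / 3) := by
  obtain ⟨j, rfl⟩ : ∃ j, i = j + 1 := ⟨i - 1, by omega⟩
  have hcoeff : (((P (j + 1)).coeff ((j + 1 + 2) / 3) : ℤ) : ZMod 3) = 1 := by
    rw [← eq_intCast (Int.castRingHom (ZMod 3)), ← coeff_map, map_P_succ, coeff_X_pow,
      if_pos (by omega)]
  intro hdvd
  have hzero := (ZMod.intCast_zmod_eq_zero_iff_dvd _ 3).2 hdvd
  exact one_ne_zero (hcoeff.symm.trans hzero)
end

section
/- With Pᵢ ∈ ℤ[x] and Xᵢ(j) as defined by the recurrence Pᵢ = (x - 3x² + 3x³)(3P_{i-1} - 3P_{i-2} + P_{i-3}) for i ≥ 4 (initial cases P₁, P₂, P₃ as given), and dᵢ := ⌈i/3⌉, we have for every i ≥ 1 and every j ≥ 1 that ν(Xᵢ(dᵢ + j)) ≥ ⌊(j+1)/2⌋, where ν is the 3-adic valuation. -/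
open Polynomial

/-! The bound `3 ^ ⌈j/2⌉ ∣ Xᵢ(dᵢ + j)` says `Pᵢ ∈ x^{dᵢ} · ℤ[3x, 3x²]`, and `ℤ[3x, 3x²]` is a ring
because `⌈j/2⌉` is subadditive. Write `x - 3x² + 3x³ = x · (1 - 3x + 3x²)` with
`1 - 3x + 3x² ∈ ℤ[3x, 3x²]`. As `d_{i-3} = dᵢ - 1 ≤ d_{i-2}, d_{i-1} ≤ dᵢ` and `3x ∈ ℤ[3x, 3x²]`, all of
`3P_{i-1}, 3P_{i-2}, P_{i-3}` lie in `x^{dᵢ-1} · ℤ[3x, 3x²]`, so the recurrence preserves the shape. -/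

namespace Polynomial

variable {R : Type*} [CommRing R]

/-- The polynomials whose coefficient of `X ^ j` is divisible by `a ^ ⌈j/2⌉`; this is `R[aX, aX²]`. -/
noncomputable def ceilHalfSubring (a : R) : Subring R[X] where
  carrier := {p | ∀ j, a ^ ((j + 1) / 2) ∣ p.coeff j}
  zero_mem' _ := by simp
  one_mem' j := by rcases j with _ | j <;> simp [coeff_one]
  add_mem' hp hq j := by simpa only [coeff_add] using dvd_add (hp j) (hq j)
  neg_mem' hp j := by simpa only [coeff_neg] using (hp j).neg_right
  mul_mem' {p q} hp hq n := by
    rw [coeff_mul]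
    refine Finset.dvd_sum fun k hk => ?_
    rw [Finset.HasAntidiagonal.mem_antidiagonal] at hk
    calc a ^ ((n + 1) / 2) ∣ a ^ ((k.1 + 1) / 2 + (k.2 + 1) / 2) := pow_dvd_pow a (by omega)
      _ = a ^ ((k.1 + 1) / 2) * a ^ ((k.2 + 1) / 2) := pow_add a _ _
      _ ∣ p.coeff k.1 * q.coeff k.2 := mul_dvd_mul (hp k.1) (hq k.2)

variable {a : R}

theorem C_mul_X_pow_mem_ceilHalfSubring {n : ℕ} (hn : n ≤ 2) :
    C a * X ^ n ∈ ceilHalfSubring a := by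
  intro j
  rw [coeff_C_mul_X_pow]
  split_ifs with hj
  · subst hj
    simpa using pow_dvd_pow a (show (j + 1) / 2 ≤ 1 by omega)
  · exact dvd_zero _

noncomputable abbrev ceilHalfSpan (a : R) (d : ℕ) : Submodule (ceilHalfSubring a) R[X] :=
  Submodule.span (ceilHalfSubring a) {X ^ d}

theorem mem_ceilHalfSpan {d : ℕ} {Q : R[X]} :
    Q ∈ ceilHalfSpan a d ↔ ∃ r ∈ ceilHalfSubring a, r * X ^ d = Q := by
  simp [Submodule.mem_span_singleton, Subtype.exists, Subring.smul_def]

theorem mul_mem_ceilHalfSpan {d : ℕ} {r Q : R[X]} (hr : r ∈ ceilHalfSubring a)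
    (hQ : Q ∈ ceilHalfSpan a d) : r * Q ∈ ceilHalfSpan a d :=
  (ceilHalfSpan a d).smul_mem ⟨r, hr⟩ hQ

theorem mem_ceilHalfSpan_zero {r : R[X]} (hr : r ∈ ceilHalfSubring a) :
    r ∈ ceilHalfSpan a 0 :=
  mem_ceilHalfSpan.2 ⟨r, hr, by simp⟩

theorem X_mul_mem_ceilHalfSpan {d : ℕ} {Q : R[X]} (hQ : Q ∈ ceilHalfSpan a d) :
    X * Q ∈ ceilHalfSpan a (d + 1) := by
  obtain ⟨r, hr, rfl⟩ := mem_ceilHalfSpan.1 hQ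
  exact mem_ceilHalfSpan.2 ⟨r, hr, by ring⟩

theorem C_mul_mem_ceilHalfSpan {d e : ℕ} (hde : d ≤ e) (hed : e ≤ d + 1) {Q : R[X]}
    (hQ : Q ∈ ceilHalfSpan a e) : C a * Q ∈ ceilHalfSpan a d := by
  obtain ⟨r, hr, rfl⟩ := mem_ceilHalfSpan.1 hQ
  obtain ⟨k, rfl⟩ := Nat.exists_eq_add_of_le hde
  refine mem_ceilHalfSpan.2 ⟨C a * X ^ k * r,
    mul_mem (C_mul_X_pow_mem_ceilHalfSubring (by omega)) hr, by ring⟩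

theorem dvd_coeff_of_mem_ceilHalfSpan {d : ℕ} {Q : R[X]} (hQ : Q ∈ ceilHalfSpan a d) (j : ℕ) :
    a ^ ((j + 1) / 2) ∣ Q.coeff (d + j) := by
  obtain ⟨r, hr, rfl⟩ := mem_ceilHalfSpan.1 hQ
  rw [add_comm d, coeff_mul_X_pow]
  exact hr j

end Polynomial

theorem one_sub_three_X_add_mem :
    (1 - 3 * X + 3 * X ^ 2 : ℤ[X]) ∈ ceilHalfSubring 3 := by
  have h₁ := C_mul_X_pow_mem_ceilHalfSubring (a := (3 : ℤ)) (n := 1) (by norm_num)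
  have h₂ := C_mul_X_pow_mem_ceilHalfSubring (a := (3 : ℤ)) (n := 2) le_rfl
  simpa using add_mem (sub_mem (one_mem _) h₁) h₂

theorem recurrence_mem_ceilHalfSpan {d e₁ e₂ : ℕ} {A B C : ℤ[X]}
    (hA : A ∈ ceilHalfSpan 3 e₁) (he₁ : d ≤ e₁) (he₁' : e₁ ≤ d + 1)
    (hB : B ∈ ceilHalfSpan 3 e₂) (he₂ : d ≤ e₂) (he₂' : e₂ ≤ d + 1)
    (hC : C ∈ ceilHalfSpan 3 d) :
    (X - 3 * X ^ 2 + 3 * X ^ 3) * (3 * A - 3 * B + C) ∈ ceilHalfSpan 3 (d + 1) := by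
  have h3A := C_mul_mem_ceilHalfSpan he₁ he₁' hA
  have h3B := C_mul_mem_ceilHalfSpan he₂ he₂' hB
  rw [C_ofNat] at h3A h3B
  rw [show (X - 3 * X ^ 2 + 3 * X ^ 3 : ℤ[X]) = X * (1 - 3 * X + 3 * X ^ 2) by ring, mul_assoc]
  exact X_mul_mem_ceilHalfSpan
    (mul_mem_ceilHalfSpan one_sub_three_X_add_mem (add_mem (sub_mem h3A h3B) hC))

theorem P_mem_ceilHalfSpan (i : ℕ) : P i ∈ ceilHalfSpan 3 ((i + 2) / 3) := by
  induction i using Nat.strong_induction_on with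
  | _ i ih =>
  have h1 : (1 : ℤ[X]) ∈ ceilHalfSpan 3 0 := mem_ceilHalfSpan_zero (one_mem _)
  -- `P₁, P₂, P₃` continue the recurrence started from `P₋₂ = P₋₁ = P₀ = 1`.
  match i with
  | 0 => simpa [P] using h1
  | 1 =>
    rw [show P 1 = (X - 3 * X ^ 2 + 3 * X ^ 3) * (3 * 1 - 3 * 1 + 1) by simp only [P]; ring]
    exact recurrence_mem_ceilHalfSpan h1 le_rfl zero_le_one h1 le_rfl zero_le_one h1
  | 2 =>
    rw [show P 2 = (X - 3 * X ^ 2 + 3 * X ^ 3) * (3 * P 1 - 3 * 1 + 1) by simp only [P]; ring]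
    exact recurrence_mem_ceilHalfSpan (ih 1 (by norm_num)) zero_le_one le_rfl
      h1 le_rfl zero_le_one h1
  | 3 =>
    rw [show P 3 = (X - 3 * X ^ 2 + 3 * X ^ 3) * (3 * P 2 - 3 * P 1 + 1) by simp only [P]; ring]
    exact recurrence_mem_ceilHalfSpan (ih 2 (by norm_num)) zero_le_one le_rfl
      (ih 1 (by norm_num)) zero_le_one le_rfl h1
  | m + 4 =>
    rw [P, show (m + 4 + 2) / 3 = (m + 3) / 3 + 1 by omega]
    exact recurrence_mem_ceilHalfSpan (ih (m + 3) (by omega)) (by omega) (by omega)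
      (ih (m + 2) (by omega)) (by omega) (by omega) (ih (m + 1) (by omega))

theorem P_coeff_three_adic_general (i j : ℕ) :
    (3 : ℤ) ^ ((j + 1) / 2) ∣ (P i).coeff ((i + 2) / 3 + j) :=
  dvd_coeff_of_mem_ceilHalfSpan (P_mem_ceilHalfSpan i) j

/-- For i ≥ 1 and j ≥ 1, ν₃(Xᵢ(dᵢ + j)) ≥ ⌊(j+1)/2⌋, i.e.,
3^⌊(j+1)/2⌋ divides the coefficient of x^{⌈i/3⌉+j} in Pᵢ. -/
theorem P_coeff_three_adic (i j : ℕ) (hi : 1 ≤ i) (hj : 1 ≤ j) :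
    (3 : ℤ) ^ ((j + 1) / 2) ∣ (P i).coeff ((i + 2) / 3 + j) :=
  P_coeff_three_adic_general i j
end
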